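/- arXiv:2506.11372 — 4 statements merged into one kernel-verified Lean document; each statement's English description precedes it below -/
import Mathlib

section
/- (Weak lower semi-continuity) Let 0 < η < 1 and M > 0. If xₙ ∈ ℓ² satisfy R_η(xₙ) ≤ M for all n and xₙ converges weakly to x in ℓ², then liminf_n R_η(xₙ) ≥ R_η(x), where R_η(z) = ‖z‖₁² − η‖z‖₂². -/
/-!
Each truncation `(∑_{i∈s} |zᵢ|)² − η ∑_{i∈s} zᵢ²` of `R_η(z)` depends only on finitely many
coordinates, so it passes to the limit under coordinatewise convergence, which weak convergence
in `ℓ²` implies. For `η ≤ 1` the truncations increase with `s` (since `‖w‖₂² ≤ ‖w‖₁²` on the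
added coordinates), so each one is a lower bound of `R_η` and `R_η(x)` is their supremum. For
`0 ≤ η < 1` they also dominate `(1 − η)(∑_{i∈s} |xᵢ|)²`, so a bound on `liminf R_η(xₙ)` forces
`x ∈ ℓ¹`.
-/

open Filter Topology

variable {ι : Type*}

noncomputable def regularizer (η : ℝ) (z : ι → ℝ) : ℝ :=
  (∑' i, |z i|) ^ 2 - η * ∑' i, z i ^ 2

def regularizerOn (η : ℝ) (s : Finset ι) (z : ι → ℝ) : ℝ :=
  (∑ i ∈ s, |z i|) ^ 2 - η * ∑ i ∈ s, z i ^ 2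

lemma sum_sq_le_sq_sum_abs (s : Finset ι) (z : ι → ℝ) :
    ∑ i ∈ s, z i ^ 2 ≤ (∑ i ∈ s, |z i|) ^ 2 := by
  simpa only [sq_abs] using Finset.sum_sq_le_sq_sum_of_nonneg fun i _ => abs_nonneg (z i)

lemma regularizerOn_mono {η : ℝ} (hη : η ≤ 1) (z : ι → ℝ) {s t : Finset ι} (hst : s ⊆ t) :
    regularizerOn η s z ≤ regularizerOn η t z := by
  classical
  have hsplit (f : ι → ℝ) : ∑ i ∈ t, f i = ∑ i ∈ t \ s, f i + ∑ i ∈ s, f i :=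
    (Finset.sum_sdiff hst).symm
  have hsq_le := sum_sq_le_sq_sum_abs (t \ s) z
  have hA : 0 ≤ ∑ i ∈ s, |z i| := Finset.sum_nonneg fun i _ => abs_nonneg (z i)
  have hB : 0 ≤ ∑ i ∈ t \ s, |z i| := Finset.sum_nonneg fun i _ => abs_nonneg (z i)
  have hC : 0 ≤ ∑ i ∈ t \ s, z i ^ 2 := Finset.sum_nonneg fun i _ => sq_nonneg (z i)
  unfold regularizerOn
  rw [hsplit, hsplit]
  nlinarith

lemma tendsto_regularizerOn_atTop (η : ℝ) {z : ι → ℝ} (h1 : Summable fun i => |z i|)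
    (h2 : Summable fun i => z i ^ 2) :
    Tendsto (fun s => regularizerOn η s z) atTop (𝓝 (regularizer η z)) :=
  (h1.hasSum.pow 2).sub (h2.hasSum.const_mul η)

lemma regularizerOn_le_regularizer {η : ℝ} (hη : η ≤ 1) {z : ι → ℝ}
    (h1 : Summable fun i => |z i|) (h2 : Summable fun i => z i ^ 2) (s : Finset ι) :
    regularizerOn η s z ≤ regularizer η z :=
  ge_of_tendsto (tendsto_regularizerOn_atTop η h1 h2)
    ((eventually_ge_atTop s).mono fun _ => regularizerOn_mono hη z)

lemma one_sub_mul_sq_sum_abs_le_regularizerOn {η : ℝ} (hη : 0 ≤ η) (s : Finset ι)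
    (z : ι → ℝ) : (1 - η) * (∑ i ∈ s, |z i|) ^ 2 ≤ regularizerOn η s z := by
  have hsq_le := sum_sq_le_sq_sum_abs s z
  unfold regularizerOn
  nlinarith

lemma summable_abs_of_regularizerOn_le {η C : ℝ} (hη0 : 0 ≤ η) (hη1 : η < 1) {z : ι → ℝ}
    (hC : ∀ s, regularizerOn η s z ≤ C) : Summable fun i => |z i| := by
  refine summable_of_sum_le (c := √(C / (1 - η))) (fun i => abs_nonneg (z i)) fun s => ?_
  have hpos : 0 < 1 - η := sub_pos.2 hη1
  refine Real.le_sqrt_of_sq_le ?_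
  rw [le_div_iff₀ hpos, mul_comm]
  exact (one_sub_mul_sq_sum_abs_le_regularizerOn hη0 s z).trans (hC s)

lemma tendsto_regularizerOn {α : Type*} {l : Filter α} {zn : α → ι → ℝ} {z : ι → ℝ}
    (hz : ∀ i, Tendsto (fun n => zn n i) l (𝓝 (z i))) (η : ℝ) (s : Finset ι) :
    Tendsto (fun n => regularizerOn η s (zn n)) l (𝓝 (regularizerOn η s z)) :=
  ((tendsto_finsetSum s fun i _ => (hz i).abs).pow 2).sub
    ((tendsto_finsetSum s fun i _ => (hz i).pow 2).const_mul η)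

lemma regularizerOn_le_liminf {α : Type*} {l : Filter α} [l.NeBot] {η M : ℝ} (hη : η ≤ 1)
    {zn : α → ι → ℝ} {z : ι → ℝ} (h1 : ∀ n, Summable fun i => |zn n i|)
    (h2 : ∀ n, Summable fun i => zn n i ^ 2) (hM : ∀ n, regularizer η (zn n) ≤ M)
    (hz : ∀ i, Tendsto (fun n => zn n i) l (𝓝 (z i))) (s : Finset ι) :
    regularizerOn η s z ≤ liminf (fun n => regularizer η (zn n)) l := by
  have hlim := tendsto_regularizerOn hz η s
  rw [← hlim.liminf_eq]
  exact liminf_le_liminf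
    (Eventually.of_forall fun n => regularizerOn_le_regularizer hη (h1 n) (h2 n) s)
    hlim.isBoundedUnder_ge (isBoundedUnder_of ⟨M, hM⟩).isCoboundedUnder_ge

theorem regularizer_le_liminf {α : Type*} {l : Filter α} [l.NeBot] {η M : ℝ} (hη0 : 0 ≤ η)
    (hη1 : η < 1) {zn : α → ι → ℝ} {z : ι → ℝ} (h1 : ∀ n, Summable fun i => |zn n i|)
    (h2 : ∀ n, Summable fun i => zn n i ^ 2) (hz2 : Summable fun i => z i ^ 2)
    (hM : ∀ n, regularizer η (zn n) ≤ M) (hz : ∀ i, Tendsto (fun n => zn n i) l (𝓝 (z i))) :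
    regularizer η z ≤ liminf (fun n => regularizer η (zn n)) l := by
  have hbound := regularizerOn_le_liminf hη1.le h1 h2 hM hz
  have hz1 := summable_abs_of_regularizerOn_le hη0 hη1 hbound
  exact le_of_tendsto (tendsto_regularizerOn_atTop η hz1 hz2) (Eventually.of_forall hbound)

lemma tendsto_apply_of_tendsto_tsum_mul {α : Type*} {l : Filter α} [DecidableEq ι]
    {zn : α → ι → ℝ} {z : ι → ℝ}
    (hweak : ∀ y : ι → ℝ, Summable (fun i => y i ^ 2) →
      Tendsto (fun n => ∑' i, zn n i * y i) l (𝓝 (∑' i, z i * y i))) (i : ι) :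
    Tendsto (fun n => zn n i) l (𝓝 (z i)) := by
  have hsingle (w : ι → ℝ) : ∑' j, w j * (Pi.single i 1 : ι → ℝ) j = w i := by
    rw [tsum_eq_single i fun j hj => by simp [hj]]
    simp
  have hy : Summable fun j => (Pi.single i 1 : ι → ℝ) j ^ 2 :=
    (hasSum_single i fun j hj => by simp [hj]).summable
  simpa only [hsingle] using hweak _ hy

theorem stmt_5_general (η M : ℝ) (hη0 : 0 < η) (hη1 : η < 1)
    (xn : ℕ → ℕ → ℝ) (x : ℕ → ℝ)
    (hxn1 : ∀ n, Summable (fun i => |xn n i|))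
    (hxn2 : ∀ n, Summable (fun i => (xn n i) ^ 2))
    (hx2 : Summable (fun i => (x i) ^ 2))
    (hbound : ∀ n, (∑' i, |xn n i|) ^ 2 - η * ∑' i, (xn n i) ^ 2 ≤ M)
    (hweak : ∀ y : ℕ → ℝ, Summable (fun i => (y i) ^ 2) →
      Tendsto (fun n => ∑' i, xn n i * y i) atTop (nhds (∑' i, x i * y i))) :
    (∑' i, |x i|) ^ 2 - η * ∑' i, (x i) ^ 2
      ≤ liminf (fun n => (∑' i, |xn n i|) ^ 2 - η * ∑' i, (xn n i) ^ 2) atTop :=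
  regularizer_le_liminf hη0.le hη1 hxn1 hxn2 hx2 hbound (tendsto_apply_of_tendsto_tsum_mul hweak)

/-- Weak lower semi-continuity of `R_η(z) = ‖z‖₁² − η‖z‖₂²` on `ℓ²` for
`0 < η < 1`: if `R_η(xₙ) ≤ M` and `xₙ ⇀ x` weakly in `ℓ²`, then
`R_η(x) ≤ liminf R_η(xₙ)`. -/
theorem stmt_5 (η M : ℝ) (hη0 : 0 < η) (hη1 : η < 1) (hM : 0 < M)
    (xn : ℕ → ℕ → ℝ) (x : ℕ → ℝ)
    (hxn1 : ∀ n, Summable (fun i => |xn n i|))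
    (hxn2 : ∀ n, Summable (fun i => (xn n i) ^ 2))
    (hx2 : Summable (fun i => (x i) ^ 2))
    (hbound : ∀ n, (∑' i, |xn n i|) ^ 2 - η * ∑' i, (xn n i) ^ 2 ≤ M)
    (hweak : ∀ y : ℕ → ℝ, Summable (fun i => (y i) ^ 2) →
      Tendsto (fun n => ∑' i, xn n i * y i) atTop (nhds (∑' i, x i * y i))) :
    (∑' i, |x i|) ^ 2 - η * ∑' i, (x i) ^ 2
      ≤ liminf (fun n => (∑' i, |xn n i|) ^ 2 - η * ∑' i, (xn n i) ^ 2) atTop :=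
  stmt_5_general η M hη0 hη1 xn x hxn1 hxn2 hx2 hbound hweak
end

section
/- (Radon–Riesz property) Let 0 < η < 1 and M > 0. Suppose xₙ ∈ ℓ² satisfy R_η(xₙ) ≤ M, xₙ ⇀ x weakly in ℓ², and R_η(xₙ) → R_η(x). Then xₙ → x strongly in ℓ². -/
open Filter

/-! Weak convergence gives coordinatewise convergence, under which every finite truncation
`(∑ i ∈ s, |z i|)² - ∑ i ∈ s, z i²` converges; since these truncations increase to
`C z = ‖z‖₁² - ‖z‖₂²`, the functional `C` is lower semicontinuous along the sequence, and so is
`‖·‖₂²` by the same argument. Because `R_η = C + (1 - η) ‖·‖₂²` with `1 - η > 0` and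
`R_η(xₙ) → R_η(x)`, neither lower bound can be strict, so `‖xₙ‖₂ → ‖x‖₂`. Expanding
`‖xₙ - x‖₂² = ‖xₙ‖₂² - 2 ⟪xₙ, x⟫ + ‖x‖₂²` and using weak convergence once more gives `xₙ → x`. -/

section Sequences

variable {ι α β : Type*} {l : Filter α}

theorem tendsto_apply_of_forall_tendsto_tsum_mul {xn : α → ι → ℝ} {x : ι → ℝ}
    (hweak : ∀ y : ι → ℝ, Summable (fun i => y i ^ 2) →
      Tendsto (fun n => ∑' i, xn n i * y i) l (nhds (∑' i, x i * y i)))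
    (i : ι) : Tendsto (fun n => xn n i) l (nhds (x i)) := by
  classical
  have hy : Summable (fun j => (Pi.single i 1 : ι → ℝ) j ^ 2) :=
    summable_of_ne_finset_zero (s := {i}) fun j hj => by simp_all
  have hsingle (z : ι → ℝ) : ∑' j, z j * (Pi.single i 1 : ι → ℝ) j = z i := by
    rw [tsum_eq_single i fun j hj => by simp [hj]]
    simp
  simpa only [hsingle] using hweak _ hy

theorem Summable.mul_of_summable_sq {f g : ι → ℝ} (hf : Summable (fun i => f i ^ 2))
    (hg : Summable (fun i => g i ^ 2)) : Summable (fun i => f i * g i) :=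
  ((hf.add hg).div_const 2).of_norm_bounded fun i => by
    have := two_mul_le_add_sq |f i| |g i|
    rw [Real.norm_eq_abs, abs_mul]
    rw [sq_abs, sq_abs] at this
    linarith

theorem tsum_sub_sq {f g : ι → ℝ} (hf : Summable (fun i => f i ^ 2))
    (hg : Summable (fun i => g i ^ 2)) :
    ∑' i, (f i - g i) ^ 2 = ∑' i, f i ^ 2 - 2 * ∑' i, f i * g i + ∑' i, g i ^ 2 := by
  have hfg := (hf.mul_of_summable_sq hg).mul_left 2
  rw [← tsum_mul_left, ← hf.tsum_sub hfg, ← (hf.sub hfg).tsum_add hg]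
  congr 1 with i
  ring

theorem sq_le_mul_tsum {c : ι → ℝ} (hc : 0 ≤ c) (h1 : Summable c) (i : ι) :
    c i ^ 2 ≤ c i * ∑' j, c j := by
  rw [sq]
  exact mul_le_mul_of_nonneg_left (h1.le_tsum i fun j _ => hc j) (hc i)

theorem Summable.sq_of_nonneg {c : ι → ℝ} (hc : 0 ≤ c) (h1 : Summable c) :
    Summable (fun i => c i ^ 2) :=
  (h1.mul_right _).of_nonneg_of_le (fun _ => sq_nonneg _) (sq_le_mul_tsum hc h1)

theorem tsum_sq_le_sq_tsum {c : ι → ℝ} (hc : 0 ≤ c) (h1 : Summable c) :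
    ∑' i, c i ^ 2 ≤ (∑' i, c i) ^ 2 :=
  calc ∑' i, c i ^ 2 ≤ ∑' i, c i * ∑' j, c j :=
        Summable.tsum_le_tsum (sq_le_mul_tsum hc h1) (h1.sq_of_nonneg hc) (h1.mul_right _)
    _ = (∑' i, c i) ^ 2 := by rw [tsum_mul_right, sq]

theorem sq_sum_sub_sum_sq_le {c : ι → ℝ} (hc : 0 ≤ c) (h1 : Summable c) (s : Finset ι) :
    (∑ i ∈ s, c i) ^ 2 - ∑ i ∈ s, c i ^ 2 ≤ (∑' i, c i) ^ 2 - ∑' i, c i ^ 2 := by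
  have htail := tsum_sq_le_sq_tsum (fun i : ↥((s : Set ι)ᶜ) => hc i) (h1.subtype _)
  rw [← h1.sum_add_tsum_compl (s := s), ← (h1.sq_of_nonneg hc).sum_add_tsum_compl (s := s)]
  have hS : 0 ≤ ∑ i ∈ s, c i := Finset.sum_nonneg fun i _ => hc i
  have hT : 0 ≤ ∑' i : ↥((s : Set ι)ᶜ), c i := tsum_nonneg fun i => hc i
  nlinarith

theorem summable_abs_of_sq_sum_sub_sum_sq_le {x : ι → ℝ} (hx2 : Summable (fun i => x i ^ 2))
    {K : ℝ} (h : ∀ s : Finset ι, (∑ i ∈ s, |x i|) ^ 2 - ∑ i ∈ s, x i ^ 2 ≤ K) :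
    Summable (fun i => |x i|) :=
  summable_of_sum_le (c := √(K + ∑' i, x i ^ 2)) (fun i => abs_nonneg _) fun s =>
    Real.le_sqrt_of_sq_le <| by
      linarith [h s, hx2.sum_le_tsum s fun i _ => sq_nonneg (x i)]

theorem tendsto_sqrt_tsum_sub_sq_of_tendsto {xn : α → ι → ℝ} {x : ι → ℝ}
    (hxn2 : ∀ n, Summable (fun i => xn n i ^ 2)) (hx2 : Summable (fun i => x i ^ 2))
    (hnorm : Tendsto (fun n => ∑' i, xn n i ^ 2) l (nhds (∑' i, x i ^ 2)))
    (hinner : Tendsto (fun n => ∑' i, xn n i * x i) l (nhds (∑' i, x i * x i))) :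
    Tendsto (fun n => √(∑' i, (xn n i - x i) ^ 2)) l (nhds 0) := by
  have hlim := (hnorm.sub (hinner.const_mul 2)).add_const (∑' i, x i ^ 2)
  have hQ : ∑' i, x i ^ 2 - 2 * ∑' i, x i * x i + ∑' i, x i ^ 2 = 0 := by
    simp only [← sq]; ring
  rw [hQ] at hlim
  simpa using (hlim.congr fun n => (tsum_sub_sq (hxn2 n) hx2).symm).sqrt

theorem eventually_lt_of_forall_le_of_tendsto {lb : Filter β} [lb.NeBot] {f : α → ℝ}
    {g : β → α → ℝ} {A : β → ℝ} {a c : ℝ} (hle : ∀ b n, g b n ≤ f n)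
    (hg : ∀ b, Tendsto (g b) l (nhds (A b))) (hA : Tendsto A lb (nhds a)) (hc : c < a) :
    ∀ᶠ n in l, c < f n := by
  obtain ⟨b, hb⟩ := (hA.eventually_const_lt hc).exists
  filter_upwards [(hg b).eventually_const_lt hb] with n hn
  exact hn.trans_le (hle b n)

theorem tendsto_of_tendsto_add_mul {u v : α → ℝ} {U V t : ℝ} (ht : 0 < t)
    (h : Tendsto (fun n => u n + t * v n) l (nhds (U + t * V)))
    (hu : ∀ c < U, ∀ᶠ n in l, c < u n) (hv : ∀ c < V, ∀ᶠ n in l, c < v n) :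
    Tendsto v l (nhds V) := by
  refine tendsto_order.2 ⟨hv, fun c hc => ?_⟩
  have hδ : 0 < t * (c - V) / 2 := by have := mul_pos ht (sub_pos.2 hc); linarith
  filter_upwards [h.eventually_lt_const (by linarith : U + t * V < U + t * V + t * (c - V) / 2),
    hu _ (by linarith : U - t * (c - V) / 2 < U)] with n hsum hun
  exact lt_of_mul_lt_mul_left (by linarith) ht.le

end Sequences

theorem stmt_6_general (η : ℝ) (hη1 : η < 1)
    (xn : ℕ → ℕ → ℝ) (x : ℕ → ℝ)
    (hxn1 : ∀ n, Summable (fun i => |xn n i|))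
    (hxn2 : ∀ n, Summable (fun i => (xn n i) ^ 2))
    (hx2 : Summable (fun i => (x i) ^ 2))
    (hweak : ∀ y : ℕ → ℝ, Summable (fun i => (y i) ^ 2) →
      Tendsto (fun n => ∑' i, xn n i * y i) atTop (nhds (∑' i, x i * y i)))
    (hR : Tendsto (fun n => (∑' i, |xn n i|) ^ 2 - η * ∑' i, (xn n i) ^ 2) atTop
      (nhds ((∑' i, |x i|) ^ 2 - η * ∑' i, (x i) ^ 2))) :
    Tendsto (fun n => Real.sqrt (∑' i, (xn n i - x i) ^ 2)) atTop (nhds 0) := by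
  have hcoord := tendsto_apply_of_forall_tendsto_tsum_mul hweak
  have htrunc (s : Finset ℕ) :
      Tendsto (fun n => (∑ i ∈ s, |xn n i|) ^ 2 - ∑ i ∈ s, xn n i ^ 2) atTop
        (nhds ((∑ i ∈ s, |x i|) ^ 2 - ∑ i ∈ s, x i ^ 2)) :=
    ((tendsto_finsetSum s fun i _ => (hcoord i).abs).pow 2).sub
      (tendsto_finsetSum s fun i _ => (hcoord i).pow 2)
  have hgap (s : Finset ℕ) (n : ℕ) :
      (∑ i ∈ s, |xn n i|) ^ 2 - ∑ i ∈ s, xn n i ^ 2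
        ≤ (∑' i, |xn n i|) ^ 2 - ∑' i, xn n i ^ 2 := by
    simpa only [sq_abs] using sq_sum_sub_sum_sq_le (fun i => abs_nonneg (xn n i)) (hxn1 n) s
  -- `R_η(xₙ)` is eventually bounded, and it dominates `‖xₙ‖₁² - ‖xₙ‖₂²` since `η < 1`.
  have hbounded (s : Finset ℕ) : (∑ i ∈ s, |x i|) ^ 2 - ∑ i ∈ s, x i ^ 2
      ≤ (∑' i, |x i|) ^ 2 - η * ∑' i, x i ^ 2 + 1 := by
    refine le_of_tendsto (htrunc s) ((hR.eventually_le_const (lt_add_one _)).mono fun n hn => ?_)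
    have : 0 ≤ ∑' i, xn n i ^ 2 := tsum_nonneg fun i => sq_nonneg (xn n i)
    nlinarith [hgap s n]
  have hx1 := summable_abs_of_sq_sum_sub_sum_sq_le hx2 hbounded
  have hgap_lower : ∀ c < (∑' i, |x i|) ^ 2 - ∑' i, x i ^ 2,
      ∀ᶠ n in atTop, c < (∑' i, |xn n i|) ^ 2 - ∑' i, xn n i ^ 2 := fun c =>
    eventually_lt_of_forall_le_of_tendsto hgap htrunc (hx1.hasSum.pow 2 |>.sub hx2.hasSum)
  have hnorm_lower : ∀ c < ∑' i, x i ^ 2, ∀ᶠ n in atTop, c < ∑' i, xn n i ^ 2 := fun c =>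
    eventually_lt_of_forall_le_of_tendsto
      (fun s n => (hxn2 n).sum_le_tsum s fun i _ => sq_nonneg (xn n i))
      (fun s => tendsto_finsetSum s fun i _ => (hcoord i).pow 2) hx2.hasSum
  have hnorm := tendsto_of_tendsto_add_mul (sub_pos.2 hη1) (by convert hR using 2 <;> ring)
    hgap_lower hnorm_lower
  exact tendsto_sqrt_tsum_sub_sq_of_tendsto hxn2 hx2 hnorm (hweak x hx2)

/-- Radon–Riesz property of `R_η(z) = ‖z‖₁² − η‖z‖₂²` for `0 < η < 1`: if
`R_η(xₙ) ≤ M`, `xₙ ⇀ x` weakly in `ℓ²` and `R_η(xₙ) → R_η(x)`, then `xₙ → x`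
strongly in `ℓ²`. -/
theorem stmt_6 (η M : ℝ) (hη0 : 0 < η) (hη1 : η < 1) (hM : 0 < M)
    (xn : ℕ → ℕ → ℝ) (x : ℕ → ℝ)
    (hxn1 : ∀ n, Summable (fun i => |xn n i|))
    (hxn2 : ∀ n, Summable (fun i => (xn n i) ^ 2))
    (hx2 : Summable (fun i => (x i) ^ 2))
    (hbound : ∀ n, (∑' i, |xn n i|) ^ 2 - η * ∑' i, (xn n i) ^ 2 ≤ M)
    (hweak : ∀ y : ℕ → ℝ, Summable (fun i => (y i) ^ 2) →
      Tendsto (fun n => ∑' i, xn n i * y i) atTop (nhds (∑' i, x i * y i)))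
    (hR : Tendsto (fun n => (∑' i, |xn n i|) ^ 2 - η * ∑' i, (xn n i) ^ 2) atTop
      (nhds ((∑' i, |x i|) ^ 2 - η * ∑' i, (x i) ^ 2))) :
    Tendsto (fun n => Real.sqrt (∑' i, (xn n i - x i) ^ 2)) atTop (nhds 0) :=
  stmt_6_general η hη1 xn x hxn1 hxn2 hx2 hweak hR
end

section
/- Let A : ℓ² → Y be a bounded linear operator between Hilbert spaces, y ∈ Y, α ≥ β > 0. If x ∈ ℓ² is a minimizer of J(x) = ½‖Ax − y‖² + α‖x‖₁² − β‖x‖₂², then for every index i and with x̄ := x − xᵢeᵢ, one has α‖x‖₁² − β‖x‖₂² − (α‖x̄‖₁² − β‖x̄‖₂²) ≤ ½ xᵢ² ‖Aeᵢ‖² − xᵢ⟨Aeᵢ, Ax − y⟩. -/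
open scoped RealInnerProductSpace

/-!
Replacing `x` by `x̄ = x − xᵢeᵢ` changes the fidelity residual `Ax − y` by `−xᵢAeᵢ`, so expanding
the square gives `½‖Ax̄ − y‖² = ½‖Ax − y‖² − xᵢ⟨Aeᵢ, Ax − y⟩ + ½xᵢ²‖Aeᵢ‖²`. Since `x̄` is again in
`ℓ¹`, minimality `J(x) ≤ J(x̄)` turns this identity into the claimed bound on the penalty terms.
-/

theorem norm_sub_smul_sq_real {F : Type*} [NormedAddCommGroup F] [InnerProductSpace ℝ F]
    (v w : F) (c : ℝ) :
    ‖v - c • w‖ ^ 2 = ‖v‖ ^ 2 - 2 * (c * ⟪w, v⟫) + c ^ 2 * ‖w‖ ^ 2 := by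
  rw [norm_sub_sq_real, norm_smul, real_inner_smul_right, real_inner_comm, mul_pow,
    Real.norm_eq_abs, sq_abs]

theorem lp.coeFn_sub_smul_single_one {ι 𝕜 : Type*} [DecidableEq ι] [NormedRing 𝕜]
    {p : ENNReal} [Fact (1 ≤ p)] (x : lp (fun _ : ι => 𝕜) p) (i : ι) :
    ⇑(x - x i • lp.single p i (1 : 𝕜) : lp (fun _ : ι => 𝕜) p) = Function.update x i 0 := by
  ext j
  rw [lp.coeFn_sub, lp.coeFn_smul, Pi.sub_apply, Pi.smul_apply, lp.single_apply,
    Function.update_apply]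
  rcases eq_or_ne j i with rfl | hji
  · simp
  · simp [hji]

theorem stmt_7_general {Y : Type*} [NormedAddCommGroup Y] [InnerProductSpace ℝ Y]
    (A : lp (fun _ : ℕ => ℝ) 2 →L[ℝ] Y) (y : Y) (α β : ℝ)
    (x : lp (fun _ : ℕ => ℝ) 2)
    (hx1 : Summable (fun i => |x i|))
    (hmin : ∀ z : lp (fun _ : ℕ => ℝ) 2, Summable (fun i => |z i|) →
      (1 / 2) * ‖A x - y‖ ^ 2 + α * (∑' i, |x i|) ^ 2 - β * ‖x‖ ^ 2
        ≤ (1 / 2) * ‖A z - y‖ ^ 2 + α * (∑' i, |z i|) ^ 2 - β * ‖z‖ ^ 2) :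
    ∀ i : ℕ, ∀ xbar : lp (fun _ : ℕ => ℝ) 2,
      xbar = x - x i • lp.single 2 i (1 : ℝ) →
      (α * (∑' j, |x j|) ^ 2 - β * ‖x‖ ^ 2)
          - (α * (∑' j, |xbar j|) ^ 2 - β * ‖xbar‖ ^ 2)
        ≤ (1 / 2) * (x i) ^ 2 * ‖A (lp.single 2 i (1 : ℝ))‖ ^ 2
            - x i * ⟪A (lp.single 2 i (1 : ℝ)), A x - y⟫ := by
  intro i xbar hxbar
  have hxbar_summable : Summable (fun j => |xbar j|) := by
    refine (hx1.update i 0).congr fun j => ?_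
    rw [hxbar, lp.coeFn_sub_smul_single_one, Function.update_apply, Function.update_apply]
    split_ifs <;> simp
  have hresidual : A xbar - y = (A x - y) - x i • A (lp.single 2 i (1 : ℝ)) := by
    rw [hxbar, map_sub, map_smul]
    abel
  have hmin_xbar := hmin xbar hxbar_summable
  rw [hresidual, norm_sub_smul_sq_real] at hmin_xbar
  linarith

/-- Inequality (3.1)/(3.2): if `x` minimizes
`J(z) = ½‖Az − y‖² + α‖z‖₁² − β‖z‖₂²` on `ℓ²` (with `α ≥ β > 0`), then for
every index `i`, with `x̄ = x − xᵢeᵢ`,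
`α‖x‖₁² − β‖x‖₂² − (α‖x̄‖₁² − β‖x̄‖₂²) ≤ ½xᵢ²‖Aeᵢ‖² − xᵢ⟨Aeᵢ, Ax − y⟩`. -/
theorem stmt_7 {Y : Type*} [NormedAddCommGroup Y] [InnerProductSpace ℝ Y]
    (A : lp (fun _ : ℕ => ℝ) 2 →L[ℝ] Y) (y : Y) (α β : ℝ) (hβ : 0 < β) (hαβ : β ≤ α)
    (x : lp (fun _ : ℕ => ℝ) 2)
    (hx1 : Summable (fun i => |x i|))
    (hmin : ∀ z : lp (fun _ : ℕ => ℝ) 2, Summable (fun i => |z i|) →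
      (1 / 2) * ‖A x - y‖ ^ 2 + α * (∑' i, |x i|) ^ 2 - β * ‖x‖ ^ 2
        ≤ (1 / 2) * ‖A z - y‖ ^ 2 + α * (∑' i, |z i|) ^ 2 - β * ‖z‖ ^ 2) :
    ∀ i : ℕ, ∀ xbar : lp (fun _ : ℕ => ℝ) 2,
      xbar = x - x i • lp.single 2 i (1 : ℝ) →
      (α * (∑' j, |x j|) ^ 2 - β * ‖x‖ ^ 2)
          - (α * (∑' j, |xbar j|) ^ 2 - β * ‖xbar‖ ^ 2)
        ≤ (1 / 2) * (x i) ^ 2 * ‖A (lp.single 2 i (1 : ℝ))‖ ^ 2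
            - x i * ⟪A (lp.single 2 i (1 : ℝ)), A x - y⟫ :=
  stmt_7_general A y α β x hx1 hmin
end

section
/- (Sparsity of minimizers) Let A : ℓ² → Y be bounded linear, α > β > 0, y ∈ Y. Every minimizer x of J(x) = ½‖Ax − y‖² + α‖x‖₁² − β‖x‖₂² has finite support, i.e., the set {i : xᵢ ≠ 0} is finite. -/
/-!
Deleting the `i`-th coordinate of `x` changes the energy by
`-2αS|xᵢ| + (α + β)xᵢ² - xᵢvᵢ + xᵢ²‖Aeᵢ‖²/2`, where `S = ‖x‖₁` and `vᵢ = ⟪Ax - y, Aeᵢ⟫`.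
At a minimizer this forces `2αS ≤ |vᵢ| + (α + β + ‖A‖²/2)|xᵢ|` whenever `xᵢ ≠ 0`.
Since `vᵢ` is the `i`-th coordinate of the Riesz representative of `z ↦ ⟪Ax - y, Az⟫`, both `vᵢ`
and `xᵢ` tend to `0`, so for `x ≠ 0` (hence `S > 0`) only finitely many `xᵢ` can be nonzero.
-/

open Filter Topology Function
open scoped RealInnerProductSpace

local notation "ℓ²(" ι ")" => lp (fun _ : ι => ℝ) 2

theorem Orthonormal.tendsto_apply_cofinite_zero {𝕜 E ι : Type*} [RCLike 𝕜]
    [NormedAddCommGroup E] [InnerProductSpace 𝕜 E] [CompleteSpace E] {e : ι → E}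
    (he : Orthonormal 𝕜 e) (φ : E →L[𝕜] 𝕜) :
    Tendsto (fun i => φ (e i)) cofinite (𝓝 0) := by
  set w := (InnerProductSpace.toDual 𝕜 E).symm φ
  have hnorm : ∀ i, ‖φ (e i)‖ = √(‖inner 𝕜 (e i) w‖ ^ 2) := fun i => by
    rw [Real.sqrt_sq (norm_nonneg _), ← InnerProductSpace.toDual_symm_apply, norm_inner_symm]
  rw [tendsto_zero_iff_norm_tendsto_zero]
  simpa [hnorm] using (he.inner_products_summable (x := w)).tendsto_cofinite_zero.sqrt

namespace lp

variable {ι : Type*} [DecidableEq ι]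

theorem orthonormal_single {𝕜 : Type*} [RCLike 𝕜] :
    Orthonormal 𝕜 fun i : ι => (lp.single 2 i (1 : 𝕜) : lp (fun _ : ι => 𝕜) 2) := by
  rw [orthonormal_iff_ite]
  intro i j
  rw [lp.inner_single_left]
  simp [lp.single_apply, Pi.single_apply]

theorem coeFn_sub_single_self {E : ι → Type*} [∀ i, NormedAddCommGroup (E i)] {p : ENNReal}
    (x : lp E p) (i : ι) : ⇑(x - lp.single p i (x i)) = update (⇑x) i 0 := by
  ext j
  rcases eq_or_ne j i with rfl | hji
  · simp
  · simp [hji]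

theorem norm_sub_single_self_sq {𝕜 : Type*} [RCLike 𝕜] {G : ι → Type*}
    [∀ i, NormedAddCommGroup (G i)] [∀ i, InnerProductSpace 𝕜 (G i)] (x : lp G 2) (i : ι) :
    ‖x - lp.single 2 i (x i)‖ ^ 2 = ‖x‖ ^ 2 - ‖x i‖ ^ 2 := by
  rw [@norm_sub_sq 𝕜, lp.inner_single_right, inner_self_eq_norm_sq,
    lp.norm_single (by norm_num)]
  ring

end lp

theorem HasSum.abs_update_zero {ι : Type*} [DecidableEq ι] {f : ι → ℝ} {S : ℝ}
    (hf : HasSum (fun j => |f j|) S) (i : ι) :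
    HasSum (fun j => |Function.update f i 0 j|) (S - |f i|) := by
  convert! hf.update i 0 using 1
  · ext j
    rcases eq_or_ne j i with rfl | hji <;> simp [*]
  · ring

section SparseEnergy

variable {ι Y : Type*} [NormedAddCommGroup Y] [InnerProductSpace ℝ Y]

noncomputable def sparseEnergy (A : ℓ²(ι) →L[ℝ] Y) (y : Y) (α β : ℝ) (z : ℓ²(ι)) : ℝ :=
  (1 / 2) * ‖A z - y‖ ^ 2 + α * (∑' i, |z i|) ^ 2 - β * ‖z‖ ^ 2

variable [DecidableEq ι] (A : ℓ²(ι) →L[ℝ] Y) (y : Y) (α β : ℝ) {x : ℓ²(ι)} {S : ℝ}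

theorem sparseEnergy_sub_single_self (hS : HasSum (fun j => |x j|) S) (i : ι) :
    sparseEnergy A y α β (x - lp.single 2 i (x i)) =
      sparseEnergy A y α β x - 2 * α * S * |x i| + (α + β) * x i ^ 2
        - x i * ⟪A x - y, A (lp.single 2 i 1)⟫ + x i ^ 2 * ‖A (lp.single 2 i 1)‖ ^ 2 / 2 := by
  have hres : A (x - lp.single 2 i (x i)) - y = (A x - y) - x i • A (lp.single 2 i 1) := by
    rw [← map_smul, ← lp.single_smul, smul_eq_mul, mul_one, map_sub]
    abel
  have hl1 : ∑' j, |(x - lp.single 2 i (x i) : ℓ²(ι)) j| = S - |x i| := by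
    rw [lp.coeFn_sub_single_self]
    exact (hS.abs_update_zero i).tsum_eq
  unfold sparseEnergy
  rw [hres, norm_sub_sq_real, inner_smul_right, norm_smul, hl1,
    lp.norm_sub_single_self_sq (𝕜 := ℝ), hS.tsum_eq, Real.norm_eq_abs, mul_pow, sq_abs]
  linear_combination α * sq_abs (x i)

theorem two_mul_tsum_le_of_sparseEnergy_le_sub_single (hS : HasSum (fun j => |x j|) S) {i : ι}
    (hi : x i ≠ 0)
    (hle : sparseEnergy A y α β x ≤ sparseEnergy A y α β (x - lp.single 2 i (x i))) :
    2 * α * S ≤ |⟪A x - y, A (lp.single 2 i 1)⟫| + (α + β + ‖A‖ ^ 2 / 2) * |x i| := by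
  rw [sparseEnergy_sub_single_self A y α β hS] at hle
  set v := ⟪A x - y, A (lp.single 2 i 1)⟫
  have hAe : ‖A (lp.single 2 i 1)‖ ≤ ‖A‖ := by
    simpa [lp.norm_single] using A.le_opNorm (lp.single 2 i (1 : ℝ))
  have hAe_sq : x i ^ 2 * ‖A (lp.single 2 i 1)‖ ^ 2 ≤ x i ^ 2 * ‖A‖ ^ 2 := by gcongr
  have hv : -(x i * v) ≤ |x i| * |v| := by rw [← abs_mul]; exact neg_le_abs _
  refine le_of_mul_le_mul_left ?_ (abs_pos.mpr hi)
  linear_combination hle + hv + hAe_sq / 2 - (α + β + ‖A‖ ^ 2 / 2) * sq_abs (x i)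

end SparseEnergy

/-- Sparsity of minimizers: if `α > β > 0` and `x` minimizes
`J(z) = ½‖Az − y‖² + α‖z‖₁² − β‖z‖₂²` on `ℓ²`, then `x` has finite support. -/
theorem stmt_8 {Y : Type*} [NormedAddCommGroup Y] [InnerProductSpace ℝ Y]
    (A : lp (fun _ : ℕ => ℝ) 2 →L[ℝ] Y) (y : Y) (α β : ℝ) (hβ : 0 < β) (hαβ : β < α)
    (x : lp (fun _ : ℕ => ℝ) 2)
    (hx1 : Summable (fun i => |x i|))
    (hmin : ∀ z : lp (fun _ : ℕ => ℝ) 2, Summable (fun i => |z i|) →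
      (1 / 2) * ‖A x - y‖ ^ 2 + α * (∑' i, |x i|) ^ 2 - β * ‖x‖ ^ 2
        ≤ (1 / 2) * ‖A z - y‖ ^ 2 + α * (∑' i, |z i|) ^ 2 - β * ‖z‖ ^ 2) :
    {i : ℕ | x i ≠ 0}.Finite := by
  set S := ∑' i, |x i|
  set C := α + β + ‖A‖ ^ 2 / 2
  set φ := innerSL ℝ (A x - y) ∘L A
  have hbound : ∀ i, x i ≠ 0 → 2 * α * S ≤ |φ (lp.single 2 i 1)| + C * |x i| := fun i hi =>
    two_mul_tsum_le_of_sparseEnergy_le_sub_single A y α β hx1.hasSum hi <| hmin _ <| by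
      simpa only [lp.coeFn_sub_single_self] using (hx1.hasSum.abs_update_zero i).summable
  have hlim : Tendsto (fun i => |φ (lp.single 2 i 1)| + C * |x i|) cofinite (𝓝 0) := by
    simpa using (lp.orthonormal_single.tendsto_apply_cofinite_zero φ).abs.add
      (hx1.tendsto_cofinite_zero.const_mul C)
  rcases Set.eq_empty_or_nonempty {i | x i ≠ 0} with hempty | ⟨i₀, hi₀⟩
  · simp [hempty]
  have hpos : 0 < 2 * α * S := by
    have hα : 0 < α := hβ.trans hαβ
    have hS_pos : 0 < S := hx1.tsum_pos (fun _ => abs_nonneg _) i₀ (abs_pos.mpr hi₀)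
    positivity
  refine (eventually_cofinite.mp (hlim.eventually (gt_mem_nhds hpos))).subset fun i hi => ?_
  exact (hbound i hi).not_gt
end
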